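/- arXiv:2105.12039 — 2 statements merged into one kernel-verified Lean document; each statement's English description precedes it below -/
import Mathlib

section
/- Let F : F_2^n → F_2^n be a CA global rule of diameter d = 4, offset ω = 1, given by the marker rule with single landscape 0⋆10, i.e., F(x)_i = x_i ⊕ ((1 ⊕ x_{i−1}) · x_{i+1} · (1 ⊕ x_{i+2})) with indices mod n. Then F ∘ F = id for every n ≥ 4, so F is a bijection. -/
/-- The key local identity over F₂: the landscape 0⋆10 is conserved. -/
lemma patt_key (a b c d e f h : ZMod 2) :
    (1 + (b + (1 + a) * c * (1 + d))) * (d + (1 + c) * e * (1 + f)) *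
      (1 + (e + (1 + d) * f * (1 + h))) = (1 + b) * d * (1 + e) := by
  revert a b c d e f h; decide

/-- Patt's conserved landscape rule 0⋆10 (diameter 4, offset 1): the global
rule is an involution, hence a bijection, for every n ≥ 4. -/
theorem patt_rule_involution (n : ℕ) (hn : 4 ≤ n) :
    let F : (ZMod n → ZMod 2) → ZMod n → ZMod 2 :=
      fun x i => x i + (1 + x (i - 1)) * x (i + 1) * (1 + x (i + 2))
    F ∘ F = id ∧ Function.Bijective F := by
  intro F
  have hFF : F ∘ F = id := by
    funext x i
    show F (F x) i = x i
    have two : ∀ a : ZMod 2, a + a = 0 := by decide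
    show F x i + (1 + F x (i - 1)) * F x (i + 1) * (1 + F x (i + 2)) = x i
    have e1 : F x (i - 1)
        = x (i - 1) + (1 + x (i - 2)) * x i * (1 + x (i + 1)) := by
      show x (i - 1) + (1 + x (i - 1 - 1)) * x (i - 1 + 1) * (1 + x (i - 1 + 2)) = _
      have h1 : i - 1 - 1 = i - 2 := by ring
      have h2 : i - 1 + 1 = i := by ring
      have h3 : i - 1 + 2 = i + 1 := by ring
      rw [h1, h2, h3]
    have e2 : F x (i + 1)
        = x (i + 1) + (1 + x i) * x (i + 2) * (1 + x (i + 3)) := by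
      show x (i + 1) + (1 + x (i + 1 - 1)) * x (i + 1 + 1) * (1 + x (i + 1 + 2)) = _
      have h1 : i + 1 - 1 = i := by ring
      have h2 : i + 1 + 1 = i + 2 := by ring
      have h3 : i + 1 + 2 = i + 3 := by ring
      rw [h1, h2, h3]
    have e3 : F x (i + 2)
        = x (i + 2) + (1 + x (i + 1)) * x (i + 3) * (1 + x (i + 4)) := by
      show x (i + 2) + (1 + x (i + 2 - 1)) * x (i + 2 + 1) * (1 + x (i + 2 + 2)) = _
      have h1 : i + 2 - 1 = i + 1 := by ring
      have h2 : i + 2 + 1 = i + 3 := by ring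
      have h3 : i + 2 + 2 = i + 4 := by ring
      rw [h1, h2, h3]
    rw [e1, e2, e3]
    show x i + (1 + x (i - 1)) * x (i + 1) * (1 + x (i + 2)) + _ = x i
    rw [patt_key (x (i - 2)) (x (i - 1)) (x i) (x (i + 1)) (x (i + 2)) (x (i + 3)) (x (i + 4))]
    rw [add_assoc, two, add_zero]
  refine ⟨hFF, Function.bijective_iff_has_inverse.2 ⟨F, ?_, ?_⟩⟩ <;>
    exact fun x => congrFun hFF x
end

section
/- For landscapes of width d ≥ 2 and center ω = 0 (origin at the leftmost position), the marker rule defined by a single nonempty atomic landscape L = ⋆ l_1 ⋯ l_{d−1} always has at least one neighborhood landscape compatible with L; hence no single-atomic-landscape conserved landscape rule exists with ω = 0. -/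
/-- Compatibility comparison on landscape strings (`none` stands both for the
don't-care symbol − and for the origin ⋆). -/
def leC' {d : ℕ} (A B : Fin d → Option Bool) : Prop :=
  ∀ i, A i = B i ∨ ((A i).isSome ∧ B i = none)

/-- The neighborhood landscape of cell j for a landscape L with center ω = 0:
don't cares before position j, the origin ⋆ at position j, and the shifted
entries of L afterwards. -/
def nbLandscape {d : ℕ} (L : Fin d → Option Bool) (j : Fin d) : Fin d → Option Bool :=
  fun i =>
    if i.val < j.val then none
    else L ⟨i.val - j.val, Nat.lt_of_le_of_lt (Nat.sub_le _ _) i.isLt⟩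

/-- For ω = 0 and d ≥ 2, any atomic landscape L = ⋆ l₁ ⋯ l_{d−1} has at least
one neighborhood landscape compatible with it; hence no single-atomic-landscape
conserved landscape rule exists with ω = 0. -/
theorem no_conserved_landscape_offset_zero (d : ℕ) (hd : 2 ≤ d)
    (L : Fin d → Option Bool) (h0 : L ⟨0, by omega⟩ = none)
    (hatom : ∀ i : Fin d, i.val ≠ 0 → (L i).isSome) :
    ∃ j : Fin d, j.val ≠ 0 ∧ (leC' (nbLandscape L j) L ∨ leC' L (nbLandscape L j)) := by
  refine ⟨⟨d - 1, by omega⟩, by simp; omega, Or.inr ?_⟩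
  intro i
  have hnb : nbLandscape L ⟨d - 1, by omega⟩ i = none := by
    unfold nbLandscape
    split
    · rfl
    · next h' =>
        simp only [Fin.val_mk] at h'
        have : i.val = d - 1 := by omega
        simpa [this] using h0
  by_cases h : L i = none
  · exact Or.inl (h.trans hnb.symm)
  · exact Or.inr ⟨Option.isSome_iff_ne_none.mpr h, hnb⟩
end
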